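/- arXiv:1904.07806 — 4 statements merged into one kernel-verified Lean document; each statement's English description precedes it below -/
import Mathlib

section
/- Let R₀ ⊆ R₁, R₀ ⊆ R₂ be integral domains with fraction fields L₀ ⊆ L₁, L₀ ⊆ L₂, and suppose R₁ is flat over R₀. Then the natural map R₁ ⊗_{R₀} R₂ → L₁ ⊗_{L₀} L₂ is injective. -/
open scoped TensorProduct

/-- Let `R₀ ⊆ R₁`, `R₀ ⊆ R₂` be integral domains with fraction fields
`L₀ ⊆ L₁`, `L₀ ⊆ L₂`, and suppose `R₁` is flat over `R₀`. Then the natural map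
`R₁ ⊗[R₀] R₂ → L₁ ⊗[L₀] L₂` is injective. -/
theorem stmt3 (R₀ R₁ R₂ L₀ L₁ L₂ : Type*)
    [CommRing R₀] [IsDomain R₀] [CommRing R₁] [IsDomain R₁] [CommRing R₂] [IsDomain R₂]
    [Field L₀] [Field L₁] [Field L₂]
    [Algebra R₀ R₁] [Algebra R₀ R₂]
    (hinj₁ : Function.Injective (algebraMap R₀ R₁))
    (hinj₂ : Function.Injective (algebraMap R₀ R₂))
    [Algebra R₀ L₀] [IsFractionRing R₀ L₀]
    [Algebra R₁ L₁] [IsFractionRing R₁ L₁]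
    [Algebra R₂ L₂] [IsFractionRing R₂ L₂]
    [Algebra L₀ L₁] [Algebra L₀ L₂]
    [Algebra R₀ L₁] [Algebra R₀ L₂]
    [IsScalarTower R₀ R₁ L₁] [IsScalarTower R₀ L₀ L₁]
    [IsScalarTower R₀ R₂ L₂] [IsScalarTower R₀ L₀ L₂]
    [Module.Flat R₀ R₁] :
    Function.Injective
      (Algebra.TensorProduct.lift
        ((Algebra.TensorProduct.includeLeft :
            L₁ →ₐ[R₀] L₁ ⊗[L₀] L₂).comp (IsScalarTower.toAlgHom R₀ R₁ L₁))
        (((Algebra.TensorProduct.includeRight :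
            L₂ →ₐ[L₀] L₁ ⊗[L₀] L₂).restrictScalars R₀).comp (IsScalarTower.toAlgHom R₀ R₂ L₂))
        (fun x y => Commute.all _ _) : R₁ ⊗[R₀] R₂ →ₐ[R₀] L₁ ⊗[L₀] L₂) := by
  have hflatL₀ : Module.Flat R₀ L₀ := IsLocalization.flat L₀ (nonZeroDivisors R₀)
  have hflatL₂ : Module.Flat R₀ L₂ := Module.Flat.trans R₀ L₀ L₂
  have hcomp : TensorProduct.CompatibleSMul R₀ L₀ L₁ L₂ :=
    IsLocalization.tensorProduct_compatibleSMul (nonZeroDivisors R₀) L₀ L₁ L₂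
  -- step 1
  let g₁ : R₁ ⊗[R₀] R₂ →ₗ[R₀] R₁ ⊗[R₀] L₂ :=
    LinearMap.lTensor R₁ (IsScalarTower.toAlgHom R₀ R₂ L₂).toLinearMap
  have hg₁ : Function.Injective g₁ :=
    Module.Flat.lTensor_preserves_injective_linearMap _ (IsFractionRing.injective R₂ L₂)
  -- step 2
  let g₂ : R₁ ⊗[R₀] L₂ →ₗ[R₀] L₁ ⊗[R₀] L₂ :=
    LinearMap.rTensor L₂ (IsScalarTower.toAlgHom R₀ R₁ L₁).toLinearMap
  have hg₂ : Function.Injective g₂ :=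
    Module.Flat.rTensor_preserves_injective_linearMap _ (IsFractionRing.injective R₁ L₁)
  -- step 3
  let e₃ : L₁ ⊗[R₀] L₂ ≃ₗ[L₀] L₁ ⊗[L₀] L₂ :=
    (TensorProduct.equivOfCompatibleSMul R₀ L₀ L₀ L₁ L₂).symm
  have key : ∀ z, (Algebra.TensorProduct.lift
        ((Algebra.TensorProduct.includeLeft :
            L₁ →ₐ[R₀] L₁ ⊗[L₀] L₂).comp (IsScalarTower.toAlgHom R₀ R₁ L₁))
        (((Algebra.TensorProduct.includeRight :
            L₂ →ₐ[L₀] L₁ ⊗[L₀] L₂).restrictScalars R₀).comp (IsScalarTower.toAlgHom R₀ R₂ L₂))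
        (fun x y => Commute.all _ _) : R₁ ⊗[R₀] R₂ →ₐ[R₀] L₁ ⊗[L₀] L₂) z
      = e₃ (g₂ (g₁ z)) := by
    intro z
    induction z using TensorProduct.induction_on with
    | zero => simp
    | tmul x y =>
      have h : (TensorProduct.equivOfCompatibleSMul R₀ L₀ L₀ L₁ L₂)
          ((algebraMap R₁ L₁ x) ⊗ₜ[L₀] (algebraMap R₂ L₂ y))
          = (algebraMap R₁ L₁ x) ⊗ₜ[R₀] (algebraMap R₂ L₂ y) :=
        TensorProduct.mapOfCompatibleSMul_tmul ..
      simp [g₁, g₂, e₃, ← h]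
    | add a b ha hb => simp [ha, hb]
  intro a b hab
  apply hg₁
  apply hg₂
  apply e₃.injective.eq_iff.mp
  rw [← key, ← key, hab]
end

section
/- Let L/K be a field extension inside a common overfield, and let R₁, R₂ be K-subalgebras with fraction fields L₁, L₂ respectively, both containing a subfield L₀. If L₁ and L₂ are linearly disjoint over L₀, then the multiplication map R₁ ⊗_{R₀} R₂ → R₁·R₂ is an isomorphism onto the compositum ring, where R₀ = R₁ ∩ R₂ ∩ L₀ is as given and R₁ is flat over R₀. -/
open scoped TensorProduct

set_option maxHeartbeats 2000000
set_option synthInstance.maxHeartbeats 400000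

/-- Inside a common field `L`, given integral domains
`R₀ ⊆ R₁`, `R₀ ⊆ R₂` with fraction fields `L₀ ⊆ L₁`, `L₀ ⊆ L₂` (all inside `L`),
with `R₁` flat over `R₀`: if `L₁` and `L₂` are linearly disjoint over `L₀`
(the multiplication map `L₁ ⊗[L₀] L₂ → L` is injective), then the multiplication map
`R₁ ⊗[R₀] R₂ → L` is injective with image the compositum ring `R₁·R₂`. -/
theorem stmt4 (L : Type*) [Field L]
    (L₀ L₁ L₂ : Subfield L) (R₀ R₁ R₂ : Subring L)
    (h01 : R₀ ≤ R₁) (h02 : R₀ ≤ R₂)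
    (hL01 : L₀ ≤ L₁) (hL02 : L₀ ≤ L₂)
    (hRL₀ : (R₀ : Set L) ⊆ L₀) (hRL₁ : (R₁ : Set L) ⊆ L₁) (hRL₂ : (R₂ : Set L) ⊆ L₂)
    (hfrac₀ : ∀ x ∈ L₀, ∃ a ∈ R₀, ∃ b ∈ R₀, b ≠ 0 ∧ x = a / b)
    (hfrac₁ : ∀ x ∈ L₁, ∃ a ∈ R₁, ∃ b ∈ R₁, b ≠ 0 ∧ x = a / b)
    (hfrac₂ : ∀ x ∈ L₂, ∃ a ∈ R₂, ∃ b ∈ R₂, b ≠ 0 ∧ x = a / b)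
    (hflat : letI := (Subring.inclusion h01).toAlgebra; Module.Flat R₀ R₁)
    (hdisj : letI : Algebra L₀ L₁ := (Subfield.inclusion hL01).toAlgebra
             letI : Algebra L₀ L₂ := (Subfield.inclusion hL02).toAlgebra
             letI : Algebra L₀ L := (L₀.subtype).toAlgebra
             Function.Injective (Algebra.TensorProduct.productMap
               ({ toRingHom := L₁.subtype, commutes' := fun _ => rfl } : L₁ →ₐ[L₀] L)
               ({ toRingHom := L₂.subtype, commutes' := fun _ => rfl } : L₂ →ₐ[L₀] L))) :
    letI : Algebra R₀ R₁ := (Subring.inclusion h01).toAlgebra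
    letI : Algebra R₀ R₂ := (Subring.inclusion h02).toAlgebra
    letI : Algebra R₀ L := (R₀.subtype).toAlgebra
    let μ := Algebra.TensorProduct.productMap
      ({ toRingHom := R₁.subtype, commutes' := fun _ => rfl } : R₁ →ₐ[R₀] L)
      ({ toRingHom := R₂.subtype, commutes' := fun _ => rfl } : R₂ →ₐ[R₀] L)
    Function.Injective μ ∧
      Set.range μ = (Subring.closure ((R₁ : Set L) ∪ (R₂ : Set L)) : Set L) := by
  letI : Algebra R₀ R₁ := (Subring.inclusion h01).toAlgebra
  letI : Algebra R₀ R₂ := (Subring.inclusion h02).toAlgebra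
  letI : Algebra R₀ L := (R₀.subtype).toAlgebra
  intro μ
  constructor
  · -- Injectivity
    letI : Algebra L₀ L₁ := (Subfield.inclusion hL01).toAlgebra
    letI : Algebra L₀ L₂ := (Subfield.inclusion hL02).toAlgebra
    letI : Algebra L₀ L := (L₀.subtype).toAlgebra
    haveI : Module.Flat R₀ R₁ := hflat
    have memL2 : ∀ r : R₀, (r : L) ∈ L₂ := fun r => hL02 (hRL₀ r.2)
    letI : Algebra R₀ L₂ :=
      ({ toFun := fun r => (⟨(r : L), memL2 r⟩ : L₂),
         map_one' := rfl, map_mul' := fun _ _ => rfl,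
         map_zero' := rfl, map_add' := fun _ _ => rfl } : R₀ →+* L₂).toAlgebra
    have hsmulL : ∀ (r : R₀) (z : L), r • z = (r : L) * z := fun _ _ => rfl
    have hsmulR1 : ∀ (r : R₀) (a : R₁), ((r • a : R₁) : L) = (r : L) * (a : L) :=
      fun _ _ => rfl
    have hsmulR2 : ∀ (r : R₀) (a : R₂), ((r • a : R₂) : L) = (r : L) * (a : L) :=
      fun _ _ => rfl
    have hsmulL2 : ∀ (r : R₀) (c : L₂), ((r • c : L₂) : L) = (r : L) * (c : L) :=
      fun _ _ => rfl
    have hsmulL0L2 : ∀ (t : L₀) (c : L₂), ((t • c : L₂) : L) = (t : L) * (c : L) :=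
      fun _ _ => rfl
    -- the inclusion R₂ →ₗ[R₀] L₂
    let ι₂ : R₂ →ₗ[R₀] L₂ :=
      { toFun := fun b => ⟨(b : L), hRL₂ b.2⟩
        map_add' := fun _ _ => rfl
        map_smul' := fun r b => Subtype.ext (by
          show ((r • b : R₂) : L) = ((r • (⟨(b : L), hRL₂ b.2⟩ : L₂) : L₂) : L)
          rw [hsmulR2, hsmulL2]) }
    have hι₂ : Function.Injective ι₂ := by
      intro u v h
      have h' := congrArg (Subtype.val : L₂ → L) h
      exact Subtype.ext h'
    -- the product map on R₁ ⊗ L₂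
    let Bθ : R₁ →ₗ[R₀] L₂ →ₗ[R₀] L := LinearMap.mk₂ (R₀ : Subring L)
      (fun a c => (a : L) * (c : L))
      (fun a a' c => by push_cast; ring)
      (fun r a c => by
        show ((r • a : R₁) : L) * (c : L) = r • ((a : L) * (c : L))
        rw [hsmulR1, hsmulL]; ring)
      (fun a c c' => by push_cast; ring)
      (fun r a c => by
        show (a : L) * ((r • c : L₂) : L) = r • ((a : L) * (c : L))
        rw [hsmulL2, hsmulL]; ring)
    let θ : R₁ ⊗[R₀] L₂ →ₗ[R₀] L := TensorProduct.lift Bθ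
    have hθtmul : ∀ (a : R₁) (c : L₂), θ (a ⊗ₜ c) = (a : L) * (c : L) := fun _ _ => rfl
    have hfactor : ∀ x, μ x = θ (LinearMap.lTensor R₁ ι₂ x) := by
      intro x
      induction x using TensorProduct.induction_on with
      | zero => simp
      | tmul a b => rfl
      | add x y hx hy => rw [map_add, map_add, map_add, hx, hy]
    have hlT : Function.Injective (LinearMap.lTensor R₁ ι₂) :=
      Module.Flat.lTensor_preserves_injective_linearMap (M := R₁) ι₂ hι₂
    -- key: θ has trivial kernel
    have hker : ∀ x : R₁ ⊗[R₀] L₂, θ x = 0 → x = 0 := by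
      classical
      intro x hx
      obtain ⟨S, hS⟩ := TensorProduct.exists_finset x
      have hattach : x = ∑ i : {p // p ∈ S}, (i : R₁ × L₂).1 ⊗ₜ[R₀] (i : R₁ × L₂).2 := by
        rw [hS, Finset.univ_eq_attach, Finset.sum_attach S (fun p => p.1 ⊗ₜ[R₀] p.2)]
      set a : {p // p ∈ S} → R₁ := fun i => (i : R₁ × L₂).1 with ha
      set c : {p // p ∈ S} → L₂ := fun i => (i : R₁ × L₂).2 with hc
      set W : Submodule L₀ L₂ := Submodule.span L₀ (Set.range c) with hW
      haveI : Module.Finite L₀ W := FiniteDimensional.span_of_finite L₀ (Set.finite_range c)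
      set b := Module.finBasis L₀ W with hb
      set e : Fin (Module.finrank L₀ W) → L₂ := fun j => ((b j : W) : L₂) with he_def
      have he : LinearIndependent L₀ e :=
        b.linearIndependent.map' W.subtype W.ker_subtype
      have hcW : ∀ i, c i ∈ W := fun i => Submodule.subset_span ⟨i, rfl⟩
      set lam : {p // p ∈ S} → Fin (Module.finrank L₀ W) → L₀ :=
        fun i j => b.repr ⟨c i, hcW i⟩ j with hlam
      have hcrep : ∀ i, c i = ∑ j, lam i j • e j := by
        intro i
        have h1 := b.sum_repr ⟨c i, hcW i⟩
        have h2 := congrArg W.subtype h1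
        rw [map_sum] at h2
        simpa [hlam, he_def] using h2.symm
      -- clear denominators
      choose num hnum den hden hden0 heq using
        fun p : {p // p ∈ S} × Fin (Module.finrank L₀ W) =>
          hfrac₀ (lam p.1 p.2 : L) (lam p.1 p.2).2
      set q : L := ∏ p, den p with hqdef
      have hq0 : q ≠ 0 := Finset.prod_ne_zero_iff.mpr fun p _ => hden0 p
      have hqR0 : q ∈ R₀ := prod_mem fun p _ => hden p
      have hqL0 : q ∈ L₀ := hRL₀ hqR0
      have hpmem : ∀ p : {p // p ∈ S} × Fin (Module.finrank L₀ W),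
          (lam p.1 p.2 : L) * q ∈ R₀ := by
        intro p
        have h1 : q = den p * ∏ r ∈ Finset.univ.erase p, den r :=
          (Finset.mul_prod_erase Finset.univ den (Finset.mem_univ p)).symm
        rw [h1, heq p]
        have h2 : num p / den p * (den p * ∏ r ∈ Finset.univ.erase p, den r)
            = num p * ∏ r ∈ Finset.univ.erase p, den r := by
          rw [← mul_assoc, div_mul_cancel₀ _ (hden0 p)]
        rw [h2]
        exact mul_mem (hnum p) (prod_mem fun r _ => hden r)
      set qL0 : L₀ := ⟨q, hqL0⟩ with hqL0def
      have hqL0ne : qL0 ≠ 0 := fun h => hq0 (congrArg Subtype.val h)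
      set e' : Fin (Module.finrank L₀ W) → L₂ := fun j => qL0⁻¹ • e j with he'_def
      have he' : LinearIndependent L₀ e' := by
        have h3 := he.units_smul (fun _ => Units.mk0 qL0⁻¹ (inv_ne_zero hqL0ne))
        exact h3
      set pp : {p // p ∈ S} → Fin (Module.finrank L₀ W) → R₀ :=
        fun i j => ⟨(lam i j : L) * q, hpmem (i, j)⟩ with hpp
      have hce' : ∀ i, c i = ∑ j, pp i j • e' j := by
        intro i
        rw [hcrep i]
        refine Finset.sum_congr rfl fun j _ => Subtype.ext ?_
        rw [hsmulL0L2]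
        show (lam i j : L) * (e j : L) = ((pp i j • e' j : L₂) : L)
        rw [hsmulL2]
        show _ = ((lam i j : L) * q) * ((qL0⁻¹ • e j : L₂) : L)
        rw [hsmulL0L2]
        have : ((qL0⁻¹ : L₀) : L) = q⁻¹ := rfl
        rw [this]
        field_simp
      set mm : Fin (Module.finrank L₀ W) → R₁ := fun j => ∑ i, pp i j • a i with hmm
      have hxrep : x = ∑ j, mm j ⊗ₜ[R₀] e' j := by
        rw [hattach]
        calc ∑ i : {p // p ∈ S}, a i ⊗ₜ[R₀] c i
            = ∑ i : {p // p ∈ S}, ∑ j, (pp i j • a i) ⊗ₜ[R₀] e' j := by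
              refine Finset.sum_congr rfl fun i _ => ?_
              rw [hce' i, TensorProduct.tmul_sum]
              exact Finset.sum_congr rfl fun j _ => (TensorProduct.smul_tmul _ _ _).symm
          _ = ∑ j, ∑ i : {p // p ∈ S}, (pp i j • a i) ⊗ₜ[R₀] e' j := Finset.sum_comm
          _ = ∑ j, mm j ⊗ₜ[R₀] e' j := by
              refine Finset.sum_congr rfl fun j _ => ?_
              rw [hmm, TensorProduct.sum_tmul]
      have hθx : ∑ j, (mm j : L) * (e' j : L) = 0 := by
        have h4 : θ x = ∑ j, (mm j : L) * (e' j : L) := by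
          rw [hxrep, map_sum]
          exact Finset.sum_congr rfl fun j _ => hθtmul _ _
        rw [← h4, hx]
      -- transfer linear disjointness
      let M₁ : Submodule L₀ L :=
        { carrier := L₁
          add_mem' := fun hx hy => add_mem hx hy
          zero_mem' := zero_mem _
          smul_mem' := fun t z hz => L₁.mul_mem (hL01 t.2) hz }
      let M₂ : Submodule L₀ L :=
        { carrier := L₂
          add_mem' := fun hx hy => add_mem hx hy
          zero_mem' := zero_mem _
          smul_mem' := fun t z hz => L₂.mul_mem (hL02 t.2) hz }
      let E₁ : L₁ ≃ₗ[L₀] M₁ :=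
        { toFun := fun z => ⟨(z : L), z.2⟩
          invFun := fun z => ⟨(z : L), z.2⟩
          map_add' := fun _ _ => rfl
          map_smul' := fun _ _ => rfl
          left_inv := fun _ => rfl
          right_inv := fun _ => rfl }
      let E₂ : L₂ ≃ₗ[L₀] M₂ :=
        { toFun := fun z => ⟨(z : L), z.2⟩
          invFun := fun z => ⟨(z : L), z.2⟩
          map_add' := fun _ _ => rfl
          map_smul' := fun _ _ => rfl
          left_inv := fun _ => rfl
          right_inv := fun _ => rfl }
      have H : M₁.LinearDisjoint M₂ := by
        refine ⟨?_⟩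
        have hcomp : ∀ t, Submodule.mulMap M₁ M₂ t
            = (Algebra.TensorProduct.productMap
               ({ toRingHom := L₁.subtype, commutes' := fun _ => rfl } : L₁ →ₐ[L₀] L)
               ({ toRingHom := L₂.subtype, commutes' := fun _ => rfl } : L₂ →ₐ[L₀] L))
              ((TensorProduct.congr E₁ E₂).symm t) := by
          intro t
          induction t using TensorProduct.induction_on with
          | zero => exact (map_zero _).trans ((map_zero _).symm.trans (congrArg _ (map_zero _).symm))
          | tmul u v => rfl
          | add u v hu hv =>
            rw [map_add, hu, hv]
            exact (map_add _ _ _).symm.trans (congrArg _ (map_add _ _ _).symm)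
        intro s t h
        rw [hcomp s, hcomp t] at h
        exact (TensorProduct.congr E₁ E₂).symm.injective (hdisj h)
      haveI : Module.Flat L₀ M₁ := inferInstance
      set n : Fin (Module.finrank L₀ W) → M₂ := fun j => ⟨(e' j : L), (e' j).2⟩ with hn_def
      have hn : LinearIndependent L₀ n := he'.map' E₂.toLinearMap E₂.ker
      have hker0 := H.linearIndependent_right_of_flat hn
      set l : Fin (Module.finrank L₀ W) →₀ M₁ :=
        Finsupp.equivFunOnFinite.symm (fun j => ⟨(mm j : L), hRL₁ (mm j).2⟩) with hl_def
      have hl : M₁.mulRightMap n l = 0 := by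
        rw [Submodule.mulRightMap_apply, Finsupp.sum_fintype _ _ (by intro j; simp)]
        simpa [hl_def] using hθx
      have hl0 : l = 0 := by
        exact LinearMap.ker_eq_bot.mp hker0 (hl.trans (map_zero _).symm)
      have hmm0 : ∀ j, mm j = 0 := by
        intro j
        have h5 : l j = 0 := by rw [hl0]; rfl
        have h6 : (mm j : L) = 0 := congrArg Subtype.val h5
        exact Subtype.ext h6
      rw [hxrep]
      simp only [hmm0, TensorProduct.zero_tmul, Finset.sum_const_zero]
    have hθ : Function.Injective θ := by
      intro u v huv
      have h7 : θ (u - v) = 0 := by rw [map_sub, huv, sub_self]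
      have := hker _ h7
      exact sub_eq_zero.mp this
    intro u v h
    apply hlT
    apply hθ
    rw [← hfactor, ← hfactor, h]
  · apply Set.Subset.antisymm
    · rintro _ ⟨x, rfl⟩
      induction x using TensorProduct.induction_on with
      | zero =>
          rw [map_zero]
          exact (Subring.closure _).zero_mem
      | tmul a b =>
          show (a : L) * (b : L) ∈ _
          exact mul_mem (Subring.subset_closure (Set.mem_union_left _ a.2))
            (Subring.subset_closure (Set.mem_union_right _ b.2))
      | add x y hx hy =>
          rw [map_add]
          exact add_mem hx hy
    · intro z hz
      have h1 : Subring.closure ((R₁ : Set L) ∪ (R₂ : Set L)) ≤ μ.toRingHom.range := by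
        apply Subring.closure_le.mpr
        rintro w (hw | hw)
        · exact ⟨(⟨w, hw⟩ : R₁) ⊗ₜ 1, by
            show (w : L) * ((1 : R₂) : L) = w
            simp⟩
        · exact ⟨1 ⊗ₜ (⟨w, hw⟩ : R₂), by
            show ((1 : R₁) : L) * w = w
            simp⟩
      exact h1 hz
end

section
/- Let K ⊆ L₀ ⊆ L₁ ⊆ L be fields with L₁/K and L₀ relatively situated so that K is relatively algebraically closed in L₁. If B ⊆ R is a transcendence basis of L over K where R is a K-subalgebra with Frac(R) = L, and L ⊗_K R is an integral domain, then 1 ⊗ B is a transcendence basis of Frac(L ⊗_K R) over L. -/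
open scoped TensorProduct

set_option synthInstance.maxHeartbeats 1000000
set_option maxHeartbeats 4000000

/-- The intermediate field adjoin is the fraction field of the algebra adjoin. -/
lemma aux_isAlgebraic_adjoin {F M : Type*} [Field F] [Field M] [Algebra F M]
    {S : Set M} {a : M}
    (h : IsAlgebraic (IntermediateField.adjoin F S) a) :
    IsAlgebraic (Algebra.adjoin F S) a := by
  letI : Algebra (Algebra.adjoin F S) (IntermediateField.adjoin F S) :=
    (Subalgebra.inclusion (IntermediateField.algebra_adjoin_le_adjoin F S)).toAlgebra
  haveI : IsScalarTower (Algebra.adjoin F S) (IntermediateField.adjoin F S) M :=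
    IsScalarTower.of_algebraMap_eq (fun a => rfl)
  haveI : IsFractionRing (Algebra.adjoin F S) (IntermediateField.adjoin F S) := by
    refine (isLocalization_iff _ _).mpr ⟨?_, ?_, ?_⟩
    · rintro ⟨y, hy⟩
      rw [isUnit_iff_ne_zero]
      intro h0
      apply nonZeroDivisors.ne_zero hy
      apply Subtype.ext
      calc (y : M) = ((algebraMap (Algebra.adjoin F S) (IntermediateField.adjoin F S) y : _) : M) := rfl
        _ = 0 := by rw [h0]; rfl
    · intro z
      obtain ⟨r, s, hz⟩ := (IntermediateField.mem_adjoin_iff F (z : M)).1 z.2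
      have hmem : ∀ t : MvPolynomial S F,
          MvPolynomial.aeval (Subtype.val : S → M) t ∈ Algebra.adjoin F S := by
        intro t
        have : Algebra.adjoin F S = Algebra.adjoin F (Set.range (Subtype.val : S → M)) := by
          rw [Subtype.range_coe]
        rw [this, Algebra.adjoin_range_eq_range_aeval]
        exact ⟨t, rfl⟩
      by_cases hq : MvPolynomial.aeval (Subtype.val : S → M) s = 0
      · refine ⟨⟨0, 1⟩, ?_⟩
        have : (z : M) = 0 := by rw [hz, hq, div_zero]
        have hz0 : z = 0 := Subtype.ext this
        simp [hz0]
      · refine ⟨⟨⟨MvPolynomial.aeval (Subtype.val : S → M) r, hmem r⟩,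
          ⟨⟨MvPolynomial.aeval (Subtype.val : S → M) s, hmem s⟩,
            mem_nonZeroDivisors_of_ne_zero (by
              intro h0
              exact hq (congrArg Subtype.val h0))⟩⟩, ?_⟩
        apply Subtype.ext
        show (z : M) * MvPolynomial.aeval (Subtype.val : S → M) s
            = MvPolynomial.aeval (Subtype.val : S → M) r
        rw [hz, div_mul_cancel₀ _ hq]
    · intro x y hxy
      refine ⟨1, ?_⟩
      have hxy' : x = y := by
        apply Subtype.ext
        calc (x : M) = ((algebraMap (Algebra.adjoin F S) (IntermediateField.adjoin F S) x : _) : M) := rfl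
          _ = ((algebraMap (Algebra.adjoin F S) (IntermediateField.adjoin F S) y : _) : M) := by rw [hxy]
          _ = (y : M) := rfl
      rw [hxy']
  exact (IsFractionRing.isAlgebraic_iff (Algebra.adjoin F S)
    (IntermediateField.adjoin F S) M).mpr h

lemma aux_indep {K L R' : Type*} [Field K] [Field L] [Algebra K L] [CommRing R']
    [Nontrivial R'] [Algebra K R'] {ι : Type*} {x : ι → R'}
    (hx : AlgebraicIndependent K x) :
    AlgebraicIndependent L (fun i => ((1:L) ⊗ₜ[K] x i : L ⊗[K] R')) := by
  rw [algebraicIndependent_iff_injective_aeval]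
  have hxinj : Function.Injective (MvPolynomial.aeval x : MvPolynomial ι K →ₐ[K] R') :=
    algebraicIndependent_iff_injective_aeval.mp hx
  have key : ((MvPolynomial.aeval (fun i => ((1:L) ⊗ₜ[K] x i : L ⊗[K] R'))
        : MvPolynomial ι L →ₐ[L] L ⊗[K] R') : MvPolynomial ι L →+* L ⊗[K] R') =
      ((Algebra.TensorProduct.map (AlgHom.id K L) (MvPolynomial.aeval x)
          : L ⊗[K] MvPolynomial ι K →ₐ[K] L ⊗[K] R') : _ →+* _).comp
        (((MvPolynomial.algebraTensorAlgEquiv K L).symm : MvPolynomial ι L ≃ₐ[L] _)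
          : MvPolynomial ι L →+* L ⊗[K] MvPolynomial ι K) := by
    apply MvPolynomial.ringHom_ext
    · intro l
      show (MvPolynomial.aeval fun i => (1:L) ⊗ₜ[K] x i) (MvPolynomial.C l)
          = (Algebra.TensorProduct.map (AlgHom.id K L) (MvPolynomial.aeval x))
            ((MvPolynomial.algebraTensorAlgEquiv K L).symm (MvPolynomial.C l))
      rw [← MvPolynomial.algebraMap_eq, AlgEquiv.commutes, AlgHom.commutes]
      simp [Algebra.TensorProduct.algebraMap_apply]
    · intro i
      simp [MvPolynomial.algebraTensorAlgEquiv_symm_X]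
  have h1 : Function.Injective
      (Algebra.TensorProduct.map (AlgHom.id K L) (MvPolynomial.aeval x)
        : L ⊗[K] MvPolynomial ι K →ₐ[K] L ⊗[K] R') := by
    have := Module.Flat.lTensor_preserves_injective_linearMap (M := L)
      ((MvPolynomial.aeval x : MvPolynomial ι K →ₐ[K] R').toLinearMap) hxinj
    intro a b hab
    apply this
    show LinearMap.lTensor L _ a = LinearMap.lTensor L _ b
    have heq : ∀ t : L ⊗[K] MvPolynomial ι K,
        (Algebra.TensorProduct.map (AlgHom.id K L) (MvPolynomial.aeval x)) t
          = LinearMap.lTensor L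
            ((MvPolynomial.aeval x : MvPolynomial ι K →ₐ[K] R').toLinearMap) t := by
      intro t
      induction t using TensorProduct.induction_on with
      | zero => simp
      | tmul l p => simp
      | add a b ha hb => simp [ha, hb, map_add]
    rw [← heq, ← heq, hab]
  have : Function.Injective ((MvPolynomial.aeval (fun i => ((1:L) ⊗ₜ[K] x i : L ⊗[K] R'))
      : MvPolynomial ι L →ₐ[L] L ⊗[K] R') : MvPolynomial ι L →+* L ⊗[K] R') := by
    rw [key]
    exact h1.comp (AlgEquiv.injective _)
  exact this

/-- Let `K ⊆ L` be fields, `R` a `K`-subalgebra of `L` with fraction field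
`L`, such that `L ⊗[K] R` is an integral domain. If `B ⊆ R` is a transcendence basis of `L`
over `K`, then `1 ⊗ B` is a transcendence basis of `Frac(L ⊗[K] R)` over `L`. -/
theorem stmt8 (K L : Type*) [Field K] [Field L] [Algebra K L]
    (R : Subalgebra K L) [IsFractionRing R L]
    [IsDomain (L ⊗[K] R)]
    (B : Set L) (hBR : B ⊆ (R : Set L))
    (hB : IsTranscendenceBasis K ((↑) : B → L)) :
    letI : Algebra L (FractionRing (L ⊗[K] R)) :=
      ((algebraMap (L ⊗[K] R) (FractionRing (L ⊗[K] R))).comp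
        (algebraMap L (L ⊗[K] R))).toAlgebra
    IsTranscendenceBasis L
      (fun b : B => algebraMap (L ⊗[K] R) (FractionRing (L ⊗[K] R))
        ((1 : L) ⊗ₜ[K] (⟨(b : L), hBR b.2⟩ : R))) := by
  letI instLM : Algebra L (FractionRing (L ⊗[K] R)) :=
    ((algebraMap (L ⊗[K] R) (FractionRing (L ⊗[K] R))).comp
      (algebraMap L (L ⊗[K] R))).toAlgebra
  show IsTranscendenceBasis L
      (fun b : B => algebraMap (L ⊗[K] R) (FractionRing (L ⊗[K] R))
        ((1 : L) ⊗ₜ[K] (⟨(b : L), hBR b.2⟩ : R)))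
  set T := L ⊗[K] R with hT
  set M := FractionRing (L ⊗[K] R) with hM
  set φ : T →+* M := algebraMap T M with hφdef
  have hφ : Function.Injective φ := IsFractionRing.injective T M
  set xR : B → R := fun b => ⟨(b : L), hBR b.2⟩ with hxRdef
  set fam : B → M := fun b => φ ((1 : L) ⊗ₜ[K] xR b) with hfamdef
  -- Independence
  have hxRK : AlgebraicIndependent K xR := AlgebraicIndependent.of_comp R.val hB.1
  have hindT : AlgebraicIndependent L (fun b => ((1 : L) ⊗ₜ[K] xR b : T)) := aux_indep hxRK
  have hind : AlgebraicIndependent L fam := by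
    have := hindT.map' (f := ({ toRingHom := φ, commutes' := fun l => rfl } : T →ₐ[L] M))
      (fun a b h => hφ h)
    exact this
  -- includeRight injective
  have hincl : Function.Injective (fun r : R => ((1 : L) ⊗ₜ[K] r : T)) := by
    intro a b h
    have key : ∀ r : R,
        (Algebra.TensorProduct.productMap (AlgHom.id K L) R.val) ((1 : L) ⊗ₜ[K] r) = (r : L) := by
      intro r
      simp [Algebra.TensorProduct.productMap_apply_tmul]
    have := congrArg (Algebra.TensorProduct.productMap (AlgHom.id K L) R.val) h
    rw [key a, key b] at this
    exact Subtype.ext this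
  set ψ : R →+* M := φ.comp
    ((Algebra.TensorProduct.includeRight : R →ₐ[K] T) : R →+* T) with hψdef
  have hψ : Function.Injective ψ := by
    intro a b h
    exact hincl (hφ h)
  set E := IntermediateField.adjoin L (Set.range fam) with hE
  set A₁ : Subalgebra K R := Algebra.adjoin K (Set.range xR) with hA1
  -- membership of ψ-image of A₁ in E
  have hmemE : ∀ r : R, r ∈ A₁ → ψ r ∈ E := by
    intro r hr
    induction hr using Algebra.adjoin_induction with
    | mem x hx =>
      obtain ⟨b, rfl⟩ := hx
      exact IntermediateField.subset_adjoin L _ ⟨b, rfl⟩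
    | algebraMap k =>
      have h1 : ((1 : L) ⊗ₜ[K] (algebraMap K R k) : T) = algebraMap L T (algebraMap K L k) := by
        rw [Algebra.TensorProduct.algebraMap_apply]
        rw [Algebra.algebraMap_eq_smul_one, Algebra.algebraMap_eq_smul_one (A := L),
          TensorProduct.tmul_smul, TensorProduct.smul_tmul', algebraMap_smul]
      have h2 : ψ (algebraMap K R k) = algebraMap L M (algebraMap K L k) := by
        show φ ((1 : L) ⊗ₜ[K] (algebraMap K R k)) = _
        rw [h1]
        rfl
      rw [h2]
      exact E.algebraMap_mem _
    | add x y hx hy hx' hy' => rw [map_add]; exact E.add_mem hx' hy'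
    | mul x y hx hy hx' hy' => rw [map_mul]; exact E.mul_mem hx' hy'
  set fE : A₁ →+* E :=
    { toFun := fun a => ⟨ψ (a : R), hmemE (a : R) a.2⟩
      map_one' := Subtype.ext (by simp)
      map_mul' := fun a b => Subtype.ext (by simp)
      map_zero' := Subtype.ext (by simp)
      map_add' := fun a b => Subtype.ext (by simp) } with hfE
  have hfEinj : Function.Injective fE := by
    intro a b h
    have : ψ (a : R) = ψ (b : R) := congrArg Subtype.val h
    exact Subtype.ext (hψ this)
  -- every r : R gives ψ r algebraic over E
  have hKB : Algebra.IsAlgebraic (IntermediateField.adjoin K B) L := by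
    have := hB.isAlgebraic_field
    rwa [Subtype.range_coe] at this
  have hA1map : A₁.map R.val = Algebra.adjoin K B := by
    rw [AlgHom.map_adjoin]
    congr 1
    rw [← Set.range_comp]
    have : (R.val ∘ xR) = ((↑) : B → L) := rfl
    rw [this, Subtype.range_coe]
  have halg_r : ∀ r : R, IsAlgebraic E (ψ r) := by
    intro r
    have h1 : IsAlgebraic (IntermediateField.adjoin K B) (r : L) := hKB.isAlgebraic _
    have h2 : IsAlgebraic (Algebra.adjoin K B) (r : L) := aux_isAlgebraic_adjoin h1
    set e : A₁ ≃ₐ[K] (Algebra.adjoin K B) :=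
      (Subalgebra.equivMapOfInjective A₁ R.val Subtype.val_injective).trans
        (Subalgebra.equivOfEq _ _ hA1map) with he
    have h2' : IsAlgebraic (Algebra.adjoin K B) (R.val r) := h2
    have h3 : IsAlgebraic A₁ r :=
      h2'.of_ringHom_of_comp_eq (e : A₁ →+* Algebra.adjoin K B)
        (R.val : R →+* L) e.surjective Subtype.val_injective (RingHom.ext fun a => rfl)
    exact h3.ringHom_of_comp_eq fE ψ hfEinj (RingHom.ext fun a => rfl)
  -- every element of M is integral over E
  have himg : ∀ t : T, IsIntegral E (φ t) := by
    intro t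
    show φ t ∈ integralClosure E M
    induction t using TensorProduct.induction_on with
    | zero => rw [map_zero]; exact Subalgebra.zero_mem _
    | tmul l r =>
      have hsplit : φ (l ⊗ₜ[K] r) = algebraMap L M l * ψ r := by
        have : (l ⊗ₜ[K] r : T) = (algebraMap L T l) * ((1 : L) ⊗ₜ[K] r) := by
          rw [Algebra.TensorProduct.algebraMap_apply, Algebra.TensorProduct.tmul_mul_tmul,
            mul_one, one_mul, Algebra.algebraMap_self_apply]
        rw [this, map_mul]
        rfl
      rw [hsplit]
      refine Subalgebra.mul_mem _ ?_ ?_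
      · have hxE : algebraMap L M l ∈ E := E.algebraMap_mem l
        have : algebraMap L M l = algebraMap E M (⟨algebraMap L M l, hxE⟩ : E) := rfl
        rw [this]
        exact Subalgebra.algebraMap_mem _ _
      · exact isAlgebraic_iff_isIntegral.mp (halg_r r)
    | add x y hx hy => rw [map_add]; exact Subalgebra.add_mem _ hx hy
  have halgM : ∀ m : M, IsAlgebraic E m := by
    intro m
    obtain ⟨p, q, -, rfl⟩ := IsFractionRing.div_surjective (A := T) m
    rw [div_eq_mul_inv]
    exact isAlgebraic_iff_isIntegral.mpr ((himg p).mul ((himg q).inv))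
  -- maximality
  refine ⟨hind, ?_⟩
  intro s hs hsub
  refine Set.Subset.antisymm hsub ?_
  intro a ha
  by_contra hna
  have hyinj : Function.Injective (fun o : Option B => o.elim a fam) := by
    intro o1 o2 h
    match o1, o2 with
    | none, none => rfl
    | none, some b => exact absurd ⟨b, h.symm⟩ hna
    | some b, none => exact absurd ⟨b, h⟩ hna
    | some b1, some b2 => exact congrArg some (hind.injective h)
  have hsub2 : Set.range (fun o : Option B => o.elim a fam) ⊆ s := by
    rintro _ ⟨o, rfl⟩
    match o with
    | none => exact ha
    | some b => exact hsub ⟨b, rfl⟩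
  have hy : AlgebraicIndependent L (fun o : Option B => o.elim a fam) :=
    (algebraicIndependent_subtype_range hyinj).mp
      (AlgebraicIndependent.mono hsub2 hs)
  exact (AlgebraicIndependent.option_iff.mp hy).2 (aux_isAlgebraic_adjoin (halgM a))
end

section
/- Let k be a field and A a commutative k-algebra that is not finitely generated. Then the minimal cardinality of a k-algebra generating set of A equals dim_k A as a k-vector space. -/
universe u v

open Cardinal

lemma mk_submonoid_closure_le {M : Type v} [CommMonoid M] (s : Set M) [Infinite s] :
    Cardinal.mk (Submonoid.closure s : Set M) ≤ Cardinal.mk s := by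
  have h1 : (Submonoid.closure s : Set M) = List.prod '' {l : List M | ∀ x ∈ l, x ∈ s} :=
    Submonoid.closure_eq_image_prod s
  calc #(Submonoid.closure s : Set M) = #(List.prod '' {l : List M | ∀ x ∈ l, x ∈ s}) := by
        rw [h1]
    _ ≤ #{l : List M | ∀ x ∈ l, x ∈ s} := Cardinal.mk_image_le
    _ ≤ #(List s) := by
        refine ⟨⟨fun l => l.1.pmap Subtype.mk l.2, ?_⟩⟩
        intro l₁ l₂ hl
        have : (l₁.1.pmap Subtype.mk l₁.2).map Subtype.val
            = (l₂.1.pmap Subtype.mk l₂.2).map Subtype.val := congrArg (List.map Subtype.val) hl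
        simpa [List.map_pmap, Subtype.ext_iff] using this
    _ = #s := Cardinal.mk_list_eq_mk s

/-- Let `k` be a field and `A` a commutative `k`-algebra that is not
finitely generated. Then the minimal cardinality of a `k`-algebra generating set of `A`
equals `dim_k A` as a `k`-vector space. -/
theorem stmt10 (k : Type u) (A : Type v) [Field k] [CommRing A] [Algebra k A]
    (h : ¬ (⊤ : Subalgebra k A).FG) :
    sInf {c : Cardinal.{v} | ∃ s : Set A, Cardinal.mk s = c ∧ Algebra.adjoin k s = ⊤}
      = Module.rank k A := by
  have key : ∀ s : Set A, Algebra.adjoin k s = ⊤ → Module.rank k A ≤ #s := by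
    intro s hs
    have hsi : Infinite s := by
      rw [Set.infinite_coe_iff]
      intro hfin
      exact h ⟨hfin.toFinset, by rwa [hfin.coe_toFinset]⟩
    have hspan : Submodule.span k (Submonoid.closure s : Set A) = ⊤ := by
      have := Algebra.adjoin_eq_span (R := k) (s := s)
      rw [hs] at this
      exact this.symm
    calc Module.rank k A = Module.rank k (⊤ : Submodule k A) := (rank_top k A).symm
      _ ≤ #(Submonoid.closure s : Set A) := by rw [← hspan]; exact rank_span_le _
      _ ≤ #s := mk_submonoid_closure_le s
  have hmem : Module.rank k A ∈
      {c : Cardinal.{v} | ∃ s : Set A, Cardinal.mk s = c ∧ Algebra.adjoin k s = ⊤} := by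
    refine ⟨Module.Basis.ofVectorSpaceIndex k A, (Module.Basis.ofVectorSpace k A).mk_eq_rank'', ?_⟩
    rw [eq_top_iff]
    intro x _
    have hx : x ∈ Submodule.span k (Module.Basis.ofVectorSpaceIndex k A) := by
      have hsp := (Module.Basis.ofVectorSpace k A).span_eq
      rw [Module.Basis.range_ofVectorSpace] at hsp
      rw [hsp]; trivial
    exact Algebra.span_le_adjoin k _ hx
  refine le_antisymm (csInf_le' hmem) (le_csInf ⟨_, hmem⟩ ?_)
  rintro c ⟨s, rfl, hs⟩
  exact key s hs
end
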